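/- For the family f_u(x,y) = x⁴ + u₂x² + u₁x + y² on ℝ², the number of global minimum points of f_u is at most 2 for every (u₁,u₂,u₃) ∈ ℝ³, and the set of parameters where it equals 2 is {u₁ = 0, u₂ < 0} (a half-plane in parameter space). -/

import Mathlib

private lemma cubic_eq (a b x : ℝ)
    (h : ∀ y : ℝ, x^4 + b*x^2 + a*x ≤ y^4 + b*y^2 + a*y) :
    4*x^3 + 2*b*x + a = 0 := by
  have hd : HasDerivAt (fun t : ℝ => t^4 + b*t^2 + a*t) (4*x^3 + 2*b*x + a) x := by
    have h1 : HasDerivAt (fun t : ℝ => t^4) (4*x^3) x := by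
      simpa using hasDerivAt_pow 4 x
    have h2 : HasDerivAt (fun t : ℝ => b*t^2) (2*b*x) x := by
      have := (hasDerivAt_pow 2 x).const_mul b
      simpa [mul_comm, mul_assoc, mul_left_comm] using this
    have h3 : HasDerivAt (fun t : ℝ => a*t) a x := by
      simpa using (hasDerivAt_id x).const_mul a
    exact (h1.add h2).add h3
  have hloc : IsLocalMin (fun t : ℝ => t^4 + b*t^2 + a*t) x :=
    Filter.Eventually.of_forall h
  have := hloc.deriv_eq_zero
  rwa [hd.deriv] at this

private lemma two_min (a b x1 x2 : ℝ) (hne : x1 ≠ x2)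
    (h1 : ∀ y : ℝ, x1^4 + b*x1^2 + a*x1 ≤ y^4 + b*y^2 + a*y)
    (h2 : ∀ y : ℝ, x2^4 + b*x2^2 + a*x2 ≤ y^4 + b*y^2 + a*y) :
    a = 0 ∧ b < 0 := by
  have hd : x1 - x2 ≠ 0 := sub_ne_zero.mpr hne
  have e1 := cubic_eq a b x1 h1
  have e2 := cubic_eq a b x2 h2
  have e3 : x1^4 + b*x1^2 + a*x1 = x2^4 + b*x2^2 + a*x2 :=
    le_antisymm (h1 x2) (h2 x1)
  have hb : b = -2*(x1^2 + x1*x2 + x2^2) := by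
    have h : (x1 - x2) * (2*b + 4*(x1^2 + x1*x2 + x2^2)) = 0 := by
      linear_combination e1 - e2
    have := (mul_eq_zero.mp h).resolve_left hd
    linarith
  subst hb
  have ha : a = (x1 + x2)^3 := by
    have h : (x1 - x2) * (a - (x1 + x2)^3) = 0 := by linear_combination e3
    have := (mul_eq_zero.mp h).resolve_left hd
    linarith
  subst ha
  have hs : (x1 - x2)^2 * (x1 + x2) = 0 := by linear_combination e1
  have hs0 : x1 + x2 = 0 := by
    rcases mul_eq_zero.mp hs with h | h
    · exact absurd (pow_eq_zero_iff (n := 2) (by norm_num) |>.mp h) hd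
    · exact h
  have hx1 : x1 ≠ 0 := by
    intro h0
    apply hne
    rw [h0]; linarith
  have hx1sq : 0 < x1^2 := (sq_nonneg x1).lt_of_ne (fun h => hx1 (by nlinarith [sq_nonneg x1]))
  have hx2 : x2 = -x1 := by linarith
  constructor
  · rw [hs0]; ring
  · rw [hx2]; nlinarith

private lemma exists_min (a b : ℝ) :
    ∃ x : ℝ, ∀ y : ℝ, x^4 + b*x^2 + a*x ≤ y^4 + b*y^2 + a*y := by
  set R : ℝ := 1 + |a| + |b| with hRdef
  have hR : 1 ≤ R := by have := abs_nonneg a; have := abs_nonneg b; simp [hRdef]; linarith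
  have hcont : ContinuousOn (fun t : ℝ => t^4 + b*t^2 + a*t) (Set.Icc (-R) R) := by fun_prop
  obtain ⟨x0, hx0m, hx0⟩ := (isCompact_Icc (a := -R) (b := R)).exists_isMinOn
    ⟨0, by constructor <;> linarith⟩ hcont
  refine ⟨x0, fun y => ?_⟩
  by_cases hy : y ∈ Set.Icc (-R) R
  · exact hx0 hy
  · have h0 : x0^4 + b*x0^2 + a*x0 ≤ 0 := by
      have := hx0 (show (0:ℝ) ∈ Set.Icc (-R) R by constructor <;> linarith)
      simpa using this
    have h1 : R < |y| := by
      rw [Set.mem_Icc] at hy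
      push_neg at hy
      rcases le_or_gt (-R) y with h | h
      · exact lt_abs.mpr (Or.inl (hy h))
      · exact lt_abs.mpr (Or.inr (by linarith))
    have ht2 : |y|^2 = y^2 := sq_abs y
    have ht4 : |y|^4 = y^4 := by
      calc |y|^4 = (|y|^2)^2 := by ring
      _ = (y^2)^2 := by rw [ht2]
      _ = y^4 := by ring
    have hay : -(|a| * |y|) ≤ a*y := by
      have := neg_abs_le (a*y)
      rwa [abs_mul] at this
    have hby : -(|b| * y^2) ≤ b*y^2 := by
      nlinarith [neg_abs_le b, sq_nonneg y]
    have key : 0 ≤ y^4 + b*y^2 + a*y := by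
      nlinarith [abs_nonneg a, abs_nonneg b, abs_nonneg y, sq_nonneg (|y| - 1),
        mul_nonneg (abs_nonneg a) (abs_nonneg y), mul_nonneg (abs_nonneg b) (abs_nonneg y),
        mul_pos (lt_of_lt_of_le one_pos (le_of_lt (lt_of_le_of_lt hR h1)))
          (lt_of_lt_of_le one_pos (le_of_lt (lt_of_le_of_lt hR h1)))]
    linarith

/-- For `f_u(x,y) = x⁴ + u₂x² + u₁x + y²`, the number `N(u)` of global minimizers
of `f_u` is 1 or 2 for every `u ∈ ℝ³`, and `N(u) = 2 ↔ u₁ = 0 ∧ u₂ < 0`. -/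
theorem stmt_19 (f : (Fin 3 → ℝ) → ℝ × ℝ → ℝ)
    (hf : ∀ u p, f u p = p.1 ^ 4 + u 1 * p.1 ^ 2 + u 0 * p.1 + p.2 ^ 2)
    (N : (Fin 3 → ℝ) → ℕ)
    (hN : ∀ u, N u = Set.ncard {p : ℝ × ℝ | ∀ q, f u p ≤ f u q}) :
    ∀ u : Fin 3 → ℝ, (N u = 1 ∨ N u = 2) ∧ (N u = 2 ↔ u 0 = 0 ∧ u 1 < 0) := by
  intro u
  have hS : {p : ℝ × ℝ | ∀ q, f u p ≤ f u q} =
      {p : ℝ × ℝ | (∀ y : ℝ, p.1^4 + u 1 * p.1^2 + u 0 * p.1 ≤ y^4 + u 1 * y^2 + u 0 * y) ∧ p.2 = 0} := by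
    ext p
    simp only [Set.mem_setOf_eq, hf]
    constructor
    · intro h
      have h20 : p.2 = 0 := by
        have := h (p.1, 0)
        simp only at this
        nlinarith [sq_nonneg p.2]
      refine ⟨fun y => ?_, h20⟩
      have := h (y, 0)
      simp only at this
      nlinarith [sq_nonneg p.2, h20]
    · rintro ⟨h, h2⟩ q
      have := h q.1
      rw [h2]
      nlinarith [sq_nonneg q.2]
  by_cases hcase : u 0 = 0 ∧ u 1 < 0
  · obtain ⟨ha, hb⟩ := hcase
    set c := Real.sqrt (-(u 1)/2) with hcdef
    have hc2 : c^2 = -(u 1)/2 := Real.sq_sqrt (by linarith)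
    have hcpos : 0 < c := Real.sqrt_pos.mpr (by linarith)
    have hmin : ∀ y : ℝ, c^4 + u 1 * c^2 + u 0 * c ≤ y^4 + u 1 * y^2 + u 0 * y := by
      intro y
      rw [ha]
      nlinarith [sq_nonneg (y^2 + u 1/2), hc2]
    have hSeq : {p : ℝ × ℝ | ∀ q, f u p ≤ f u q} = {((c : ℝ), (0:ℝ)), (-c, 0)} := by
      rw [hS]
      ext p
      simp only [Set.mem_setOf_eq, Set.mem_insert_iff, Set.mem_singleton_iff, Prod.ext_iff]
      constructor
      · rintro ⟨h, h2⟩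
        have hle := h c
        rw [ha] at hle
        have hc4 : c^4 = (u 1)^2/4 := by
          rw [show c^4 = (c^2)^2 by ring, hc2]; ring
        have hsq : (p.1^2 + u 1/2)^2 ≤ 0 := by nlinarith [hc2, hc4]
        have hsq0 : p.1^2 = c^2 := by nlinarith [sq_nonneg (p.1^2 + u 1/2), hc2]
        have : (p.1 - c) * (p.1 + c) = 0 := by nlinarith
        rcases mul_eq_zero.mp this with h' | h'
        · exact Or.inl ⟨by linarith, h2⟩
        · exact Or.inr ⟨by linarith, h2⟩
      · rintro (⟨h1, h2⟩ | ⟨h1, h2⟩)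
        · constructor
          · rw [h1]; exact hmin
          · exact h2
        · constructor
          · rw [h1]
            intro y
            have := hmin y
            nlinarith [hc2, ha]
          · exact h2
    have hN2 : N u = 2 := by
      rw [hN, hSeq]
      rw [Set.ncard_pair]
      intro hcontra
      rw [Prod.ext_iff] at hcontra
      have : c = -c := hcontra.1
      linarith
    exact ⟨Or.inr hN2, ⟨fun _ => ⟨ha, hb⟩, fun _ => hN2⟩⟩
  · obtain ⟨x0, hx0⟩ := exists_min (u 0) (u 1)
    have hSeq : {p : ℝ × ℝ | ∀ q, f u p ≤ f u q} = {((x0 : ℝ), (0:ℝ))} := by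
      rw [hS]
      ext p
      simp only [Set.mem_setOf_eq, Set.mem_singleton_iff, Prod.ext_iff]
      constructor
      · rintro ⟨h, h2⟩
        refine ⟨?_, h2⟩
        by_contra hne
        exact hcase (two_min (u 0) (u 1) p.1 x0 hne h hx0)
      · rintro ⟨h1, h2⟩
        exact ⟨by rw [h1]; exact hx0, h2⟩
    have hN1 : N u = 1 := by rw [hN, hSeq, Set.ncard_singleton]
    refine ⟨Or.inl hN1, ⟨fun h => absurd (hN1 ▸ h) (by norm_num), fun h => absurd h hcase⟩⟩
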